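/- Let Δ > 0. Define Q⁺_sup(r) = (2^{−r} + r·ln 2 − 1)/(2^{−Δ} + Δ·ln 2 − 1), Q⁺_min(r) = Q⁺(0, r), and, with X = 2^Δ, r* = log₂( −X·(2·ln(X+1) − ln X − 2·ln 2) / (2X·(ln(X+1) − ln X − ln 2) + X − 1) ). Then for all real i ≤ 0, c ≤ 0 and all r with 0 ≤ r < Δ, |Q⁺(i, r) − Q⁺(c, r)| < Q⁺_sup(r*) − Q⁺_min(r*). -/

import Mathlib

/-- Φ⁺(x) = log₂(1 + 2^x) -/
noncomputable def Phip (x : ℝ) : ℝ := Real.logb 2 (1 + (2:ℝ) ^ x)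

/-- (Φ⁺)'(x) = 2^x / (2^x + 1) -/
noncomputable def dPhip (x : ℝ) : ℝ := (2:ℝ) ^ x / ((2:ℝ) ^ x + 1)

/-- First-order Taylor remainder E⁺(i, r) -/
noncomputable def Ep (i r : ℝ) : ℝ := Phip (i - r) - Phip i + r * dPhip i

/-- Error ratio Q⁺(i, r) = E⁺(i, r)/E⁺(i, Δ) -/
noncomputable def Qp (Δ i r : ℝ) : ℝ := Ep i r / Ep i Δ

/-- Q⁺_sup(r) = (2^{−r} + r·ln 2 − 1)/(2^{−Δ} + Δ·ln 2 − 1) -/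
noncomputable def QpSup (Δ r : ℝ) : ℝ :=
  ((2:ℝ) ^ (-r) + r * Real.log 2 - 1) / ((2:ℝ) ^ (-Δ) + Δ * Real.log 2 - 1)

/-- Q⁺_min(r) = Q⁺(0, r) -/
noncomputable def QpMin (Δ r : ℝ) : ℝ := Qp Δ 0 r

/-- r* for the addition case, with X = 2^Δ -/
noncomputable def rStarP (Δ : ℝ) : ℝ :=
  Real.logb 2
    (-(2:ℝ) ^ Δ * (2 * Real.log ((2:ℝ) ^ Δ + 1) - Real.log ((2:ℝ) ^ Δ) - 2 * Real.log 2) /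
      (2 * (2:ℝ) ^ Δ * (Real.log ((2:ℝ) ^ Δ + 1) - Real.log ((2:ℝ) ^ Δ) - Real.log 2)
        + (2:ℝ) ^ Δ - 1))

/-!
With `a = 2 ^ i` and `s = 2 ^ (-r)`, the `r`-derivative of `Ep i r` is
`a (1 - s) / ((a + 1) (a s + 1))`. Its quotient by the derivative of
`Fsup r = 2 ^ (-r) + r log 2 - 1` is `a / (log 2 (a + 1) (a s + 1))`, increasing in `r`, and its
quotient by the derivative of `Ep 0 r` is `2 a (s + 1) / ((a + 1) (a s + 1))`, decreasing in `r`
when `a ≤ 1`. By the monotone form of l'Hôpital's rule, `Qp Δ i r` therefore lies in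
`[QpMin Δ r, QpSup Δ r)` for `i ≤ 0`, which bounds `|Qp Δ i r - Qp Δ c r|` by the gap
`QpSup Δ r - QpMin Δ r`. The derivative of the gap changes sign once, at the Cauchy mean-value
point of `Ep 0` against `Fsup` on `[0, Δ]`; solving for that point gives the closed form `rStarP Δ`.
-/

open Real Set

section MonotoneLHopital

variable {f g f' g' : ℝ → ℝ}

theorem strictMonoOn_Icc_of_hasDerivAt_pos (hg : ∀ x, HasDerivAt g (g' x) x) {a b : ℝ}
    (hg' : ∀ x ∈ Ioo a b, 0 < g' x) : StrictMonoOn g (Icc a b) :=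
  strictMonoOn_of_deriv_pos (convex_Icc a b) (fun x _ => (hg x).continuousAt.continuousWithinAt)
    fun x hx => by rw [(hg x).deriv]; exact hg' x (by rwa [interior_Icc] at hx)

theorem exists_sub_eq_deriv_div_mul_sub (hf : ∀ x, HasDerivAt f (f' x) x)
    (hg : ∀ x, HasDerivAt g (g' x) x) {x y : ℝ} (hxy : x < y) (hg' : ∀ ξ ∈ Ioo x y, g' ξ ≠ 0) :
    ∃ ξ ∈ Ioo x y, f y - f x = f' ξ / g' ξ * (g y - g x) := by
  obtain ⟨ξ, hξ, h⟩ := exists_ratio_hasDerivAt_eq_ratio_slope f f' hxy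
    (fun z _ => (hf z).continuousAt.continuousWithinAt) (fun z _ => hf z) g g'
    (fun z _ => (hg z).continuousAt.continuousWithinAt) (fun z _ => hg z)
  refine ⟨ξ, hξ, ?_⟩
  field_simp [hg' ξ hξ]
  linarith

theorem exists_div_sub_div_eq_mul_deriv_div_sub (hf : ∀ x, HasDerivAt f (f' x) x)
    (hg : ∀ x, HasDerivAt g (g' x) x) (hf0 : f 0 = 0) (hg0 : g 0 = 0) {b : ℝ}
    (hg' : ∀ x ∈ Ioo 0 b, 0 < g' x) {x y : ℝ} (hx : 0 < x) (hxy : x < y) (hyb : y ≤ b) :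
    ∃ ξ₁ ∈ Ioo 0 x, ∃ ξ₂ ∈ Ioo x y, ∃ t > 0,
      f y / g y - f x / g x = t * (f' ξ₂ / g' ξ₂ - f' ξ₁ / g' ξ₁) := by
  have hg_mono := strictMonoOn_Icc_of_hasDerivAt_pos hg hg'
  have hxb : x ≤ b := (hxy.trans_le hyb).le
  have hgx : 0 < g x := hg0 ▸ hg_mono ⟨le_rfl, hx.le.trans hxb⟩ ⟨hx.le, hxb⟩ hx
  have hgxy : g x < g y := hg_mono ⟨hx.le, hxb⟩ ⟨(hx.trans hxy).le, hyb⟩ hxy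
  obtain ⟨ξ₁, hξ₁, h₁⟩ := exists_sub_eq_deriv_div_mul_sub hf hg hx
    fun z hz => (hg' z ⟨hz.1, hz.2.trans_le hxb⟩).ne'
  obtain ⟨ξ₂, hξ₂, h₂⟩ := exists_sub_eq_deriv_div_mul_sub hf hg hxy
    fun z hz => (hg' z ⟨hx.trans hz.1, hz.2.trans_le hyb⟩).ne'
  rw [hf0, hg0, sub_zero, sub_zero] at h₁
  -- `f y / g y` is a convex combination of `f x / g x` and `(f y - f x) / (g y - g x)`.
  refine ⟨ξ₁, hξ₁, ξ₂, hξ₂, (g y - g x) / g y, div_pos (by linarith) (by linarith), ?_⟩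
  generalize f' ξ₁ / g' ξ₁ = ρ₁ at h₁ ⊢
  generalize f' ξ₂ / g' ξ₂ = ρ₂ at h₂ ⊢
  field_simp [hgx.ne', (hgx.trans hgxy).ne']
  linear_combination g x * h₂ + (g x - g y) * h₁

theorem strictMonoOn_div_of_deriv_div (hf : ∀ x, HasDerivAt f (f' x) x)
    (hg : ∀ x, HasDerivAt g (g' x) x) (hf0 : f 0 = 0) (hg0 : g 0 = 0) {b : ℝ}
    (hg' : ∀ x ∈ Ioo 0 b, 0 < g' x) (hρ : StrictMonoOn (fun x => f' x / g' x) (Ioo 0 b)) :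
    StrictMonoOn (fun x => f x / g x) (Ioc 0 b) := by
  intro x hx y hy hxy
  obtain ⟨ξ₁, hξ₁, ξ₂, hξ₂, t, ht, h⟩ :=
    exists_div_sub_div_eq_mul_deriv_div_sub hf hg hf0 hg0 hg' hx.1 hxy hy.2
  have := hρ ⟨hξ₁.1, hξ₁.2.trans_le hx.2⟩ ⟨hx.1.trans hξ₂.1, hξ₂.2.trans_le hy.2⟩
    (hξ₁.2.trans hξ₂.1)
  simp only
  nlinarith [mul_pos ht (sub_pos.2 this)]

theorem antitoneOn_div_of_deriv_div (hf : ∀ x, HasDerivAt f (f' x) x)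
    (hg : ∀ x, HasDerivAt g (g' x) x) (hf0 : f 0 = 0) (hg0 : g 0 = 0) {b : ℝ}
    (hg' : ∀ x ∈ Ioo 0 b, 0 < g' x) (hρ : AntitoneOn (fun x => f' x / g' x) (Ioo 0 b)) :
    AntitoneOn (fun x => f x / g x) (Ioc 0 b) := by
  intro x hx y hy hxy
  rcases hxy.eq_or_lt with rfl | hxy
  · rfl
  obtain ⟨ξ₁, hξ₁, ξ₂, hξ₂, t, ht, h⟩ :=
    exists_div_sub_div_eq_mul_deriv_div_sub hf hg hf0 hg0 hg' hx.1 hxy hy.2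
  have := hρ ⟨hξ₁.1, hξ₁.2.trans_le hx.2⟩ ⟨hx.1.trans hξ₂.1, hξ₂.2.trans_le hy.2⟩
    (hξ₁.2.trans hξ₂.1).le
  simp only
  nlinarith [mul_nonneg ht.le (sub_nonneg.2 this)]

theorem div_sub_div_le_of_div_eq_deriv_div (hf : ∀ x, HasDerivAt f (f' x) x)
    (hg : ∀ x, HasDerivAt g (g' x) x) {a b ξ x : ℝ} (hg' : ∀ x ∈ Ioo a b, 0 < g' x)
    (hfb : 0 < f b) (hρ : MonotoneOn (fun x => f' x / g' x) (Ioo a b)) (hξ : ξ ∈ Ioo a b)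
    (hξb : f b / g b = f' ξ / g' ξ) (hx : x ∈ Icc a b) :
    g x / g b - f x / f b ≤ g ξ / g b - f ξ / f b := by
  set D := fun x => g x / g b - f x / f b
  have hD : ∀ x, HasDerivAt D (g' x / g b - f' x / f b) x :=
    fun x => ((hg x).div_const _).sub ((hf x).div_const _)
  have hD' : ∀ x ∈ Ioo a b, deriv D x = g' x / f b * (f' ξ / g' ξ - f' x / g' x) := by
    intro x hx
    rw [(hD x).deriv, ← hξb]
    field_simp [(hg' x hx).ne']
  have hD_cont : ContinuousOn D (Icc a b) := fun x _ => (hD x).continuousAt.continuousWithinAt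
  have hD_diff : DifferentiableOn ℝ D (Icc a b) :=
    fun x _ => (hD x).differentiableAt.differentiableWithinAt
  rcases le_total x ξ with hxξ | hξx
  · refine monotoneOn_of_deriv_nonneg (convex_Icc a ξ) (hD_cont.mono (Icc_subset_Icc_right hξ.2.le))
      (hD_diff.mono (interior_subset.trans (Icc_subset_Icc_right hξ.2.le))) (fun y hy => ?_)
      ⟨hx.1, hxξ⟩ ⟨hξ.1.le, le_rfl⟩ hxξ
    rw [interior_Icc] at hy
    have hy' : y ∈ Ioo a b := ⟨hy.1, hy.2.trans hξ.2⟩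
    rw [hD' y hy']
    exact mul_nonneg (div_nonneg (hg' y hy').le hfb.le) (sub_nonneg.2 (hρ hy' hξ hy.2.le))
  · refine antitoneOn_of_deriv_nonpos (convex_Icc ξ b) (hD_cont.mono (Icc_subset_Icc_left hξ.1.le))
      (hD_diff.mono (interior_subset.trans (Icc_subset_Icc_left hξ.1.le))) (fun y hy => ?_)
      ⟨le_rfl, hξ.2.le⟩ ⟨hξx, hx.2⟩ hξx
    rw [interior_Icc] at hy
    have hy' : y ∈ Ioo a b := ⟨hξ.1.trans hy.1, hy.2⟩
    rw [hD' y hy']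
    exact mul_nonpos_of_nonneg_of_nonpos (div_nonneg (hg' y hy').le hfb.le)
      (sub_nonpos.2 (hρ hξ hy' hy.1.le))

end MonotoneLHopital

theorem hasDerivAt_Phip (x : ℝ) : HasDerivAt Phip (dPhip x) x := by
  have h := (((hasStrictDerivAt_const_rpow two_pos x).hasDerivAt.const_add 1).log
    (by positivity)).div_const (log 2)
  have hPhip : Phip = fun y => log (1 + (2:ℝ) ^ y) / log 2 := by
    funext y
    rw [Phip, logb]
  rw [hPhip, dPhip]
  refine h.congr_deriv ?_
  field_simp
  ring

theorem hasDerivAt_Ep (i r : ℝ) : HasDerivAt (Ep i) (dPhip i - dPhip (i - r)) r := by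
  have h := (((hasDerivAt_Phip (i - r)).comp r ((hasDerivAt_id r).const_sub i)).sub_const
    (Phip i)).add ((hasDerivAt_id r).mul_const (dPhip i))
  exact h.congr_deriv (by ring)

theorem Ep_zero (i : ℝ) : Ep i 0 = 0 := by
  simp [Ep]

/-- The numerator of `QpSup`: as `i → -∞`, `log 2 * 2 ^ (-i) * Ep i r` tends to `Fsup r`. -/
noncomputable def Fsup (r : ℝ) : ℝ := (2:ℝ) ^ (-r) + r * log 2 - 1

theorem hasDerivAt_Fsup (x : ℝ) : HasDerivAt Fsup (log 2 * (1 - (2:ℝ) ^ (-x))) x := by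
  have h := (((hasStrictDerivAt_const_rpow two_pos (-x)).hasDerivAt.comp x
    (hasDerivAt_neg x)).add ((hasDerivAt_id x).mul_const (log 2))).sub_const 1
  exact h.congr_deriv (by ring)

theorem Fsup_zero : Fsup 0 = 0 := by
  simp [Fsup]

theorem two_rpow_neg_lt_one {x : ℝ} (hx : 0 < x) : (2:ℝ) ^ (-x) < 1 :=
  rpow_lt_one_of_one_lt_of_neg one_lt_two (neg_neg_of_pos hx)

theorem dPhip_sub_dPhip_sub (i x : ℝ) :
    dPhip i - dPhip (i - x) =
      (2:ℝ) ^ i * (1 - (2:ℝ) ^ (-x)) / (((2:ℝ) ^ i + 1) * ((2:ℝ) ^ i * (2:ℝ) ^ (-x) + 1)) := by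
  have := rpow_pos_of_pos two_pos i
  have := rpow_pos_of_pos two_pos (-x)
  rw [dPhip, dPhip, sub_eq_add_neg i, rpow_add two_pos]
  field_simp
  ring

theorem dPhip_sub_dPhip_sub_pos (i : ℝ) {x : ℝ} (hx : 0 < x) : 0 < dPhip i - dPhip (i - x) := by
  have := two_rpow_neg_lt_one hx
  rw [dPhip_sub_dPhip_sub]
  exact div_pos (mul_pos (by positivity) (by linarith)) (by positivity)

theorem Fsup_deriv_pos {x : ℝ} (hx : 0 < x) : 0 < log 2 * (1 - (2:ℝ) ^ (-x)) :=
  mul_pos (log_pos one_lt_two) (sub_pos.2 (two_rpow_neg_lt_one hx))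

theorem Ep_pos (i : ℝ) {r : ℝ} (hr : 0 < r) : 0 < Ep i r :=
  Ep_zero i ▸ strictMonoOn_Icc_of_hasDerivAt_pos (hasDerivAt_Ep i)
    (fun _ hx => dPhip_sub_dPhip_sub_pos i hx.1) (left_mem_Icc.2 hr.le) (right_mem_Icc.2 hr.le) hr

theorem Fsup_pos {r : ℝ} (hr : 0 < r) : 0 < Fsup r :=
  Fsup_zero ▸ strictMonoOn_Icc_of_hasDerivAt_pos hasDerivAt_Fsup
    (fun _ hx => Fsup_deriv_pos hx.1) (left_mem_Icc.2 hr.le) (right_mem_Icc.2 hr.le) hr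

theorem Ep_deriv_div_Fsup_deriv (i : ℝ) {x : ℝ} (hx : 0 < x) :
    (dPhip i - dPhip (i - x)) / (log 2 * (1 - (2:ℝ) ^ (-x))) =
      (2:ℝ) ^ i / (log 2 * (((2:ℝ) ^ i + 1) * ((2:ℝ) ^ i * (2:ℝ) ^ (-x) + 1))) := by
  have := two_rpow_neg_lt_one hx
  have := rpow_pos_of_pos two_pos i
  have := rpow_pos_of_pos two_pos (-x)
  have : (1 - (2:ℝ) ^ (-x)) ≠ 0 := by linarith
  have := (log_pos one_lt_two).ne'
  rw [dPhip_sub_dPhip_sub]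
  field_simp

theorem strictMonoOn_Ep_deriv_div_Fsup_deriv (i : ℝ) :
    StrictMonoOn (fun x => (dPhip i - dPhip (i - x)) / (log 2 * (1 - (2:ℝ) ^ (-x)))) (Ioi 0) := by
  intro x hx y hy hxy
  simp only [Ep_deriv_div_Fsup_deriv i hx, Ep_deriv_div_Fsup_deriv i hy]
  have h2i := rpow_pos_of_pos two_pos i
  have h2y := rpow_pos_of_pos two_pos (-y)
  have : (2:ℝ) ^ (-y) < (2:ℝ) ^ (-x) := rpow_lt_rpow_of_exponent_lt one_lt_two (neg_lt_neg hxy)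
  refine div_lt_div_of_pos_left h2i (by positivity) ?_
  gcongr

theorem Ep_deriv_div_Ep_zero_deriv (i : ℝ) {x : ℝ} (hx : 0 < x) :
    (dPhip i - dPhip (i - x)) / (dPhip 0 - dPhip (0 - x)) =
      2 * (2:ℝ) ^ i * ((2:ℝ) ^ (-x) + 1) / (((2:ℝ) ^ i + 1) * ((2:ℝ) ^ i * (2:ℝ) ^ (-x) + 1)) := by
  have := two_rpow_neg_lt_one hx
  have := rpow_pos_of_pos two_pos i
  have := rpow_pos_of_pos two_pos (-x)
  have : (1 - (2:ℝ) ^ (-x)) ≠ 0 := by linarith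
  rw [dPhip_sub_dPhip_sub, dPhip_sub_dPhip_sub, rpow_zero]
  field_simp
  ring

theorem antitoneOn_Ep_deriv_div_Ep_zero_deriv {i : ℝ} (hi : i ≤ 0) :
    AntitoneOn (fun x => (dPhip i - dPhip (i - x)) / (dPhip 0 - dPhip (0 - x))) (Ioi 0) := by
  intro x hx y hy hxy
  simp only [Ep_deriv_div_Ep_zero_deriv i hx, Ep_deriv_div_Ep_zero_deriv i hy]
  have h2i := rpow_pos_of_pos two_pos i
  have h2i1 : (2:ℝ) ^ i ≤ 1 := rpow_le_one_of_one_le_of_nonpos one_le_two hi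
  have := rpow_pos_of_pos two_pos (-x)
  have := rpow_pos_of_pos two_pos (-y)
  have : (2:ℝ) ^ (-y) ≤ (2:ℝ) ^ (-x) := rpow_le_rpow_of_exponent_le one_le_two (neg_le_neg hxy)
  rw [div_le_div_iff₀ (by positivity) (by positivity)]
  nlinarith [mul_nonneg (mul_nonneg (by positivity : (0:ℝ) ≤ 2 * 2 ^ i * (2 ^ i + 1))
    (sub_nonneg.2 h2i1)) (sub_nonneg.2 this)]

theorem Qp_lt_QpSup {Δ i r : ℝ} (hr : 0 < r) (hrΔ : r < Δ) : Qp Δ i r < QpSup Δ r := by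
  have h := strictMonoOn_div_of_deriv_div (hasDerivAt_Ep i) hasDerivAt_Fsup (Ep_zero i) Fsup_zero
    (fun _ hx => Fsup_deriv_pos hx.1)
    ((strictMonoOn_Ep_deriv_div_Fsup_deriv i).mono Ioo_subset_Ioi_self)
    ⟨hr, hrΔ.le⟩ ⟨hr.trans hrΔ, le_rfl⟩ hrΔ
  have hΔ := hr.trans hrΔ
  change Ep i r / Ep i Δ < Fsup r / Fsup Δ
  rw [div_lt_div_iff₀ (Fsup_pos hr) (Fsup_pos hΔ)] at h
  rw [div_lt_div_iff₀ (Ep_pos i hΔ) (Fsup_pos hΔ)]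
  linarith

theorem QpMin_le_Qp {Δ i r : ℝ} (hi : i ≤ 0) (hr : 0 < r) (hrΔ : r ≤ Δ) :
    QpMin Δ r ≤ Qp Δ i r := by
  have h := antitoneOn_div_of_deriv_div (hasDerivAt_Ep i) (hasDerivAt_Ep 0) (Ep_zero i) (Ep_zero 0)
    (fun _ hx => dPhip_sub_dPhip_sub_pos 0 hx.1)
    ((antitoneOn_Ep_deriv_div_Ep_zero_deriv hi).mono Ioo_subset_Ioi_self)
    ⟨hr, hrΔ⟩ ⟨hr.trans_le hrΔ, le_rfl⟩ hrΔ
  have hΔ := hr.trans_le hrΔ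
  change Ep 0 r / Ep 0 Δ ≤ Ep i r / Ep i Δ
  rw [div_le_div_iff₀ (Ep_pos 0 hΔ) (Ep_pos 0 hr)] at h
  rw [div_le_div_iff₀ (Ep_pos 0 hΔ) (Ep_pos i hΔ)]
  linarith

theorem two_mul_log_two_mul_Ep_zero (Δ : ℝ) :
    2 * log 2 * Ep 0 Δ = 2 * log ((2:ℝ) ^ Δ + 1) - log ((2:ℝ) ^ Δ) - 2 * log 2 := by
  have hX := rpow_pos_of_pos two_pos Δ
  have h : 1 + (2:ℝ) ^ (-Δ) = ((2:ℝ) ^ Δ + 1) / (2:ℝ) ^ Δ := by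
    rw [rpow_neg two_pos.le]
    field_simp
  have := (log_pos one_lt_two).ne'
  simp only [Ep, Phip, dPhip, logb, zero_sub, rpow_zero, one_add_one_eq_two, h]
  rw [log_div (by positivity) hX.ne', log_rpow two_pos]
  field_simp
  ring

theorem rStarP_eq {Δ ξ : ℝ} (hΔ : 0 < Δ)
    (hξ : Fsup Δ = 2 * log 2 * Ep 0 Δ * ((2:ℝ) ^ (-ξ) + 1)) : rStarP Δ = ξ := by
  have hA := two_mul_log_two_mul_Ep_zero Δ
  have hX := rpow_pos_of_pos two_pos Δ
  have hF : (2:ℝ) ^ Δ * Fsup Δ = 1 + (2:ℝ) ^ Δ * log ((2:ℝ) ^ Δ) - (2:ℝ) ^ Δ := by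
    rw [Fsup, log_rpow two_pos, rpow_neg two_pos.le]
    field_simp
  have hden : 2 * (2:ℝ) ^ Δ * (log ((2:ℝ) ^ Δ + 1) - log ((2:ℝ) ^ Δ) - log 2) + (2:ℝ) ^ Δ - 1
      = -((2:ℝ) ^ Δ * (2 * log 2 * Ep 0 Δ) * (2:ℝ) ^ (-ξ)) := by
    linear_combination -(2:ℝ) ^ Δ * hA + hF - (2:ℝ) ^ Δ * hξ
  rw [rStarP, hden, ← hA]
  convert logb_rpow (b := 2) (x := ξ) two_pos (by norm_num) using 2
  have := rpow_pos_of_pos two_pos ξ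
  have := Ep_pos 0 hΔ
  rw [rpow_neg two_pos.le]
  field_simp

theorem rStarP_mem_Ioo_and_div_eq {Δ : ℝ} (hΔ : 0 < Δ) :
    rStarP Δ ∈ Ioo 0 Δ ∧ Ep 0 Δ / Fsup Δ =
      (dPhip 0 - dPhip (0 - rStarP Δ)) / (log 2 * (1 - (2:ℝ) ^ (-rStarP Δ))) := by
  obtain ⟨ξ, hξ, h⟩ := exists_sub_eq_deriv_div_mul_sub (hasDerivAt_Ep 0) hasDerivAt_Fsup hΔ
    fun x hx => (Fsup_deriv_pos hx.1).ne'
  rw [Ep_zero, Fsup_zero, sub_zero, sub_zero] at h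
  have hF := Fsup_pos hΔ
  have := log_pos one_lt_two
  have := rpow_pos_of_pos two_pos (-ξ)
  have hrStarP : rStarP Δ = ξ := by
    refine rStarP_eq hΔ ?_
    rw [h, Ep_deriv_div_Fsup_deriv 0 hξ.1, rpow_zero]
    field_simp
    ring
  rw [hrStarP, h]
  exact ⟨hξ, by field_simp⟩

theorem QpSup_sub_QpMin_le {Δ x : ℝ} (hΔ : 0 < Δ) (hx : x ∈ Icc 0 Δ) :
    QpSup Δ x - QpMin Δ x ≤ QpSup Δ (rStarP Δ) - QpMin Δ (rStarP Δ) :=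
  div_sub_div_le_of_div_eq_deriv_div (hasDerivAt_Ep 0) hasDerivAt_Fsup
    (fun _ hy => Fsup_deriv_pos hy.1) (Ep_pos 0 hΔ)
    ((strictMonoOn_Ep_deriv_div_Fsup_deriv 0).mono Ioo_subset_Ioi_self).monotoneOn
    (rStarP_mem_Ioo_and_div_eq hΔ).1 (rStarP_mem_Ioo_and_div_eq hΔ).2 hx

theorem stmt_9 (Δ : ℝ) (hΔ : 0 < Δ) :
    ∀ i c r : ℝ, i ≤ 0 → c ≤ 0 → 0 ≤ r → r < Δ →
      |Qp Δ i r - Qp Δ c r| < QpSup Δ (rStarP Δ) - QpMin Δ (rStarP Δ) := by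
  intro i c r hi hc hr hrΔ
  rcases hr.eq_or_lt with rfl | hr
  · obtain ⟨⟨hrStarP, hrStarPΔ⟩, -⟩ := rStarP_mem_Ioo_and_div_eq hΔ
    simp only [Qp, Ep_zero, zero_div, sub_self, abs_zero, sub_pos]
    exact Qp_lt_QpSup hrStarP hrStarPΔ
  calc |Qp Δ i r - Qp Δ c r| < QpSup Δ r - QpMin Δ r := by
        rw [abs_sub_lt_iff]
        constructor
        · linarith [Qp_lt_QpSup (i := i) hr hrΔ, QpMin_le_Qp hc hr hrΔ.le]
        · linarith [Qp_lt_QpSup (i := c) hr hrΔ, QpMin_le_Qp hi hr hrΔ.le]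
    _ ≤ QpSup Δ (rStarP Δ) - QpMin Δ (rStarP Δ) := QpSup_sub_QpMin_le hΔ ⟨hr.le, hrΔ.le⟩
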